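/- Let h : ℝ^d → ℝ satisfy ‖h‖_{0,β,p,q} := sup_{x ∈ ℝ^d} |exp(β‖x‖_p^q) h(x)| < ∞ for some β > 0, 1 ≤ p ≤ ∞, 1 ≤ q < ∞. Define the wrapped function h̃(x) = ∑_{k ∈ ℤ^d} h(x + 2a·k) for x ∈ [−a,a]^d. Then for any a ≥ β^{−1/q} and any x ∈ [−a,a]^d, |h(x) − h̃(x)| ≤ C_{d,q} · ‖h‖_{0,β,p,q} · exp(−β a^q), where C_{d,q} = ∑_{w=1}^∞ ((2w+1)^d − (2w−1)^d) e^{−((2w−1)^q − 1)}. -/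

import Mathlib

open scoped ENNReal

/-- The constant `C_{d,q} = ∑_{w=1}^∞ ((2w+1)^d − (2w−1)^d) e^{−((2w−1)^q − 1)}`. -/
noncomputable def Cdq (d : ℕ) (q : ℝ) : ℝ :=
  ∑' w : ℕ, ((2 * ((w : ℝ) + 1) + 1) ^ d - (2 * ((w : ℝ) + 1) - 1) ^ d) *
    Real.exp (-((2 * ((w : ℝ) + 1) - 1) ^ q - 1))

/-- The `ℓ_p` norm on `ℝ^d`, `1 ≤ p ≤ ∞`, via the `PiLp` norm. -/
noncomputable def pnorm (d : ℕ) (p : ℝ≥0∞) (x : Fin d → ℝ) : ℝ :=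
  ‖(WithLp.equiv p (Fin d → ℝ)).symm x‖

/-! Split `ℤ^d` into the hollow boxes `box n = {k | ‖k‖_∞ = n}`, of `(2n+1)^d - (2n-1)^d` points
each. For `k ∈ box n`, `n ≥ 1`, and `x ∈ [-a,a]^d`, some coordinate of `x + 2ak` has absolute value
at least `(2n-1)a`, so the decay of `h` gives
`|h(x + 2ak)| ≤ Cn·exp(-βa^q (2n-1)^q) ≤ Cn·exp(-βa^q)·exp(-((2n-1)^q - 1))`, the last step
because `βa^q ≥ 1`. Summing these bounds box by box gives the constant `Cdq d q`. -/

open Finset Real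

namespace Int
variable {ι : Type*} [Fintype ι] [DecidableEq ι]

lemma mem_Icc_neg_natCast_pi {k : ι → ℤ} {n : ℕ} :
    k ∈ Icc (-n : ι → ℤ) n ↔ univ.sup (fun i => (k i).natAbs) ≤ n := by
  simp only [mem_Icc, Pi.le_def, Pi.neg_apply, Pi.natCast_apply, Finset.sup_le_iff, mem_univ,
    true_imp_iff, ← forall_and]
  exact forall_congr' fun i => by omega

lemma mem_box_pi {k : ι → ℤ} {n : ℕ} :
    k ∈ box n ↔ univ.sup (fun i => (k i).natAbs) = n := by
  cases n with
  | zero =>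
    simp [funext_iff]
  | succ n =>
    rw [box_succ_eq_sdiff, mem_sdiff, mem_Icc_neg_natCast_pi, mem_Icc_neg_natCast_pi]
    omega

lemma existsUnique_mem_box_pi (k : ι → ℤ) : ∃! n : ℕ, k ∈ box n := by
  simp [mem_box_pi]

lemma card_box_pi_succ (n : ℕ) :
    #(box (n + 1) : Finset (ι → ℤ)) =
      (2 * n + 3) ^ Fintype.card ι - (2 * n + 1) ^ Fintype.card ι := by
  rw [box_succ_eq_sdiff, card_sdiff_of_subset, Pi.card_Icc, Pi.card_Icc]
  · simp only [Pi.neg_apply, Pi.natCast_apply, Int.card_Icc, prod_const, card_univ]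
    congr 2 <;> omega
  · exact Icc_subset_Icc (by simp) (by simp)

lemma exists_natAbs_eq_of_mem_box_pi {k : ι → ℤ} {n : ℕ} (hk : k ∈ box (n + 1)) :
    ∃ i, (k i).natAbs = n + 1 := by
  rw [mem_box_pi] at hk
  have : (univ : Finset ι).Nonempty := by
    by_contra h
    rw [not_nonempty_iff_eq_empty] at h
    simp [h] at hk
  obtain ⟨i, -, hi⟩ := exists_mem_eq_sup _ this fun i => (k i).natAbs
  exact ⟨i, hi ▸ hk⟩

lemma cast_card_box_pi_succ (n : ℕ) :
    (#(box (n + 1) : Finset (ι → ℤ)) : ℝ) =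
      (2 * ((n : ℝ) + 1) + 1) ^ Fintype.card ι - (2 * ((n : ℝ) + 1) - 1) ^ Fintype.card ι := by
  rw [card_box_pi_succ, Nat.cast_sub (Nat.pow_le_pow_left (by omega) _)]
  push_cast
  ring_nf

theorem hasSum_comp_sup_natAbs {G : ℕ → ℝ} (hG : ∀ n, 0 ≤ G n)
    (hs : Summable fun n => (#(box n : Finset (ι → ℤ)) : ℝ) * G n) :
    HasSum (fun k : ι → ℤ => G (univ.sup fun i => (k i).natAbs))
      (∑' n, (#(box n : Finset (ι → ℤ)) : ℝ) * G n) := by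
  set F := fun k : ι → ℤ => G (univ.sup fun i => (k i).natAbs)
  let e := Set.sigmaEquiv (fun n => ((box n : Finset (ι → ℤ)) : Set (ι → ℤ)))
    fun k => by simpa only [mem_coe] using existsUnique_mem_box_pi k
  have hfib (n : ℕ) : HasSum (fun k : ((box n : Finset (ι → ℤ)) : Set (ι → ℤ)) => F k)
      ((#(box n : Finset (ι → ℤ)) : ℝ) * G n) := by
    convert (box n).hasSum fun _ => G n using 1
    · ext ⟨k, hk⟩
      simp [F, mem_box_pi.mp (mem_coe.mp hk)]
    · simp
  have hsig : Summable (F ∘ e) :=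
    (summable_sigma_of_nonneg fun _ => hG _).mpr
      ⟨fun n => (hfib n).summable, hs.congr fun n => (hfib n).tsum_eq.symm⟩
  rw [← e.hasSum_iff, (hsig.hasSum.sigma hfib).tsum_eq]
  exact hsig.hasSum

theorem abs_sub_tsum_le_of_abs_le_box {f : (ι → ℤ) → ℝ} {g : ℕ → ℝ} (hg : ∀ n, 0 ≤ g n)
    (hf : ∀ n, ∀ k ∈ box (n + 1), |f k| ≤ g n)
    (hs : Summable fun n => (#(box (n + 1) : Finset (ι → ℤ)) : ℝ) * g n) :
    |f 0 - ∑' k, f k| ≤ ∑' n, (#(box (n + 1) : Finset (ι → ℤ)) : ℝ) * g n := by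
  let G : ℕ → ℝ := fun m => if m = 0 then 0 else g (m - 1)
  have hG : HasSum (fun k : ι → ℤ => G (univ.sup fun i => (k i).natAbs))
      (∑' n, (#(box (n + 1) : Finset (ι → ℤ)) : ℝ) * g n) := by
    have hs' : Summable fun m => (#(box m : Finset (ι → ℤ)) : ℝ) * G m :=
      (summable_nat_add_iff 1).mp (by simpa [G] using hs)
    have hG0 (m : ℕ) : 0 ≤ G m := by by_cases hm : m = 0 <;> simp [G, hm, hg (m - 1)]
    convert hasSum_comp_sup_natAbs hG0 hs' using 1
    rw [hs'.tsum_eq_zero_add]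
    simp [G]
  have hbound (k : ι → ℤ) :
      ‖if k = 0 then 0 else f k‖ ≤ G (univ.sup fun i => (k i).natAbs) := by
    obtain ⟨m, hm⟩ := (existsUnique_mem_box_pi k).exists
    rw [mem_box_pi.mp hm] at *
    cases m with
    | zero => simp [G, (eq_zero_iff_eq_zero_of_mem_box hm).mpr rfl]
    | succ n =>
      simpa [G, (eq_zero_iff_eq_zero_of_mem_box hm).not.mpr n.succ_ne_zero] using hf n k hm
  have hsum : Summable (Function.update f 0 0) := by
    refine (hG.summable.of_norm_bounded hbound).congr fun k => ?_
    exact (Function.update_apply f 0 0 k).symm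
  rw [hsum.tsum_eq_add_tsum_ite' 0, sub_add_cancel_left, abs_neg]
  exact tsum_of_norm_bounded hG hbound

end Int

lemma abs_apply_le_pnorm {d : ℕ} {p : ℝ≥0∞} (hp : 1 ≤ p) (y : Fin d → ℝ) (i : Fin d) :
    |y i| ≤ pnorm d p y := by
  have : Fact (1 ≤ p) := ⟨hp⟩
  simpa [pnorm] using PiLp.norm_apply_le ((WithLp.equiv p (Fin d → ℝ)).symm y) i

lemma one_le_mul_rpow_of_rpow_neg_inv_le {β q a : ℝ} (hβ : 0 < β) (hq : 0 < q)
    (ha : β ^ (-1 / q) ≤ a) : 1 ≤ β * a ^ q := by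
  have hβq : (β ^ (-1 / q)) ^ q = β⁻¹ := by
    rw [← rpow_mul hβ.le, div_mul_cancel₀ _ hq.ne', rpow_neg_one]
  have := rpow_le_rpow (rpow_nonneg hβ.le _) ha hq.le
  rwa [hβq, inv_le_iff_one_le_mul₀' hβ] at this

lemma abs_le_mul_exp_neg_of_abs_exp_mul_le {r v C : ℝ} (h : |exp r * v| ≤ C) :
    |v| ≤ C * exp (-r) := by
  rwa [abs_mul, abs_exp, ← le_div_iff₀' (exp_pos r), div_eq_mul_inv, ← exp_neg] at h

lemma exp_neg_mul_rpow_le {β q a s t : ℝ} (hq : 0 ≤ q) (ha : 0 ≤ a) (hβa : 1 ≤ β * a ^ q)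
    (hs : 1 ≤ s) (ht : a * s ≤ t) :
    exp (-(β * t ^ q)) ≤ exp (-β * a ^ q) * exp (-(s ^ q - 1)) := by
  have hsq : 1 ≤ s ^ q := one_le_rpow hs hq
  have hmono : (a * s) ^ q ≤ t ^ q := rpow_le_rpow (by positivity) ht hq
  rw [mul_rpow ha (by linarith)] at hmono
  have hβ : 0 ≤ β := by
    by_contra! hβ
    nlinarith [rpow_nonneg ha q]
  rw [← exp_add, exp_le_exp]
  nlinarith [mul_le_mul_of_nonneg_left hmono hβ, mul_nonneg (sub_nonneg.2 hβa) (sub_nonneg.2 hsq)]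

lemma exists_le_abs_add_smul_of_mem_box {ι : Type*} [Fintype ι] [DecidableEq ι]
    {x : ι → ℝ} {a : ℝ} (hx : ‖x‖ ≤ a) {k : ι → ℤ} {n : ℕ} (hk : k ∈ box (n + 1)) :
    ∃ i, a * (2 * ((n : ℝ) + 1) - 1) ≤ |(x + (2 * a) • fun i => (k i : ℝ)) i| := by
  obtain ⟨i, hi⟩ := Int.exists_natAbs_eq_of_mem_box_pi hk
  have hki : |(k i : ℝ)| = n + 1 := by
    rw [← Int.cast_abs, Int.abs_eq_natAbs, hi]
    push_cast
    ring
  have hxi : |x i| ≤ a := (norm_le_pi_norm x i).trans hx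
  refine ⟨i, ?_⟩
  have ha : 0 ≤ 2 * a := by linarith [norm_nonneg x]
  have := abs_sub_abs_le_abs_sub ((2 * a) * (k i : ℝ)) (-x i)
  rw [abs_mul, hki, abs_of_nonneg ha, abs_neg, sub_neg_eq_add] at this
  simp only [Pi.add_apply, Pi.smul_apply, smul_eq_mul, add_comm (x i)]
  linarith

lemma summable_cdq {d : ℕ} {q : ℝ} (hq : 1 ≤ q) :
    Summable fun w : ℕ => ((2 * ((w : ℝ) + 1) + 1) ^ d - (2 * ((w : ℝ) + 1) - 1) ^ d) *
      exp (-((2 * ((w : ℝ) + 1) - 1) ^ q - 1)) := by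
  have hgeom : Summable fun w : ℕ => ((w : ℝ) + 1) ^ d * exp (-2 * ((w : ℝ) + 1)) := by
    simpa using (summable_nat_add_iff 1).mpr (summable_pow_mul_exp_neg_nat_mul d two_pos)
  refine Summable.of_nonneg_of_le (fun w => ?_) (fun w => ?_) (hgeom.mul_left (3 ^ d * exp 2))
  all_goals have hw : (1 : ℝ) ≤ 2 * ((w : ℝ) + 1) - 1 := by linarith [w.cast_nonneg (α := ℝ)]
  · have : (2 * ((w : ℝ) + 1) - 1) ^ d ≤ (2 * ((w : ℝ) + 1) + 1) ^ d :=
      pow_le_pow_left₀ (by linarith) (by linarith) d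
    exact mul_nonneg (by linarith) (exp_pos _).le
  · have hpow : (2 * ((w : ℝ) + 1) + 1) ^ d - (2 * ((w : ℝ) + 1) - 1) ^ d ≤
        3 ^ d * ((w : ℝ) + 1) ^ d := by
      rw [← mul_pow]
      have := pow_nonneg (zero_le_one.trans hw) d
      have := pow_le_pow_left₀ (by positivity) (by linarith : 2 * ((w : ℝ) + 1) + 1 ≤ 3 * (w + 1)) d
      linarith
    have hexp : exp (-((2 * ((w : ℝ) + 1) - 1) ^ q - 1)) ≤ exp 2 * exp (-2 * ((w : ℝ) + 1)) := by
      rw [← exp_add, exp_le_exp]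
      have := self_le_rpow_of_one_le hw hq
      linarith
    calc _ ≤ 3 ^ d * ((w : ℝ) + 1) ^ d * (exp 2 * exp (-2 * ((w : ℝ) + 1))) :=
          mul_le_mul hpow hexp (exp_pos _).le (by positivity)
      _ = _ := by ring

lemma abs_apply_add_smul_le_of_mem_box {d : ℕ} {p : ℝ≥0∞} (hp : 1 ≤ p) {β q a Cn : ℝ}
    (hq : 0 < q) (hβa : 1 ≤ β * a ^ q) {h : (Fin d → ℝ) → ℝ}
    (hCn : ∀ y, |exp (β * pnorm d p y ^ q) * h y| ≤ Cn) {x : Fin d → ℝ} (hx : ‖x‖ ≤ a)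
    {n : ℕ} {k : Fin d → ℤ} (hk : k ∈ box (n + 1)) :
    |h (x + (2 * a) • fun i => (k i : ℝ))| ≤
      Cn * exp (-β * a ^ q) * exp (-((2 * ((n : ℝ) + 1) - 1) ^ q - 1)) := by
  obtain ⟨i, hi⟩ := exists_le_abs_add_smul_of_mem_box hx hk
  have hCn0 : 0 ≤ Cn := (abs_nonneg _).trans (hCn 0)
  calc _ ≤ Cn * exp (-(β * pnorm d p (x + (2 * a) • fun i => (k i : ℝ)) ^ q)) :=
        abs_le_mul_exp_neg_of_abs_exp_mul_le (hCn _)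
    _ ≤ Cn * (exp (-β * a ^ q) * exp (-((2 * ((n : ℝ) + 1) - 1) ^ q - 1))) := by
        refine mul_le_mul_of_nonneg_left
          (exp_neg_mul_rpow_le hq.le ((norm_nonneg x).trans hx) hβa ?_ ?_) hCn0
        · linarith [n.cast_nonneg (α := ℝ)]
        · exact hi.trans (abs_apply_le_pnorm hp _ i)
    _ = _ := by ring

/-- If `sup_x |exp(β‖x‖_p^q) h(x)| ≤ Cn < ∞` for some `β > 0`,
`1 ≤ p ≤ ∞`, `1 ≤ q < ∞`, and `h̃(x) = ∑_{k ∈ ℤ^d} h(x + 2a k)` is the wrapped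
function, then for any `a ≥ β^{−1/q}` and any `x ∈ [−a,a]^d`,
`|h(x) − h̃(x)| ≤ C_{d,q} · Cn · exp(−β a^q)`. -/
theorem stmt2 (d : ℕ) (β q : ℝ) (hβ : 0 < β) (hq : 1 ≤ q) (p : ℝ≥0∞) (hp : 1 ≤ p)
    (h : (Fin d → ℝ) → ℝ) (Cn : ℝ)
    (hCn : ∀ x : Fin d → ℝ, |Real.exp (β * pnorm d p x ^ q) * h x| ≤ Cn)
    (a : ℝ) (ha : β ^ (-1 / q) ≤ a) (x : Fin d → ℝ) (hx : ‖x‖ ≤ a) :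
    |h x - ∑' k : Fin d → ℤ, h (x + (2 * a) • (fun i => (k i : ℝ)))| ≤
      Cdq d q * Cn * Real.exp (-β * a ^ q) := by
  have hβa := one_le_mul_rpow_of_rpow_neg_inv_le hβ (by linarith) ha
  have hcard (n : ℕ) := Int.cast_card_box_pi_succ (ι := Fin d) n
  rw [Fintype.card_fin] at hcard
  have hCn0 : 0 ≤ Cn := (abs_nonneg _).trans (hCn 0)
  have hsum := (summable_cdq (d := d) hq).mul_left (Cn * exp (-β * a ^ q))
  have hwrap := Int.abs_sub_tsum_le_of_abs_le_box (fun n => by positivity)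
    (fun n k hk => abs_apply_add_smul_le_of_mem_box hp (by linarith) hβa hCn hx hk)
    (by simpa only [hcard, mul_left_comm] using hsum)
  simp only [Pi.zero_apply, Int.cast_zero, ← Pi.zero_def, smul_zero, add_zero, hcard,
    mul_left_comm _ (Cn * exp (-β * a ^ q)), tsum_mul_left] at hwrap
  exact hwrap.trans_eq (by rw [Cdq]; ring)
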